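/- Let f : ℝ → ℝ be analytic at 0 with f(0) = 0, and suppose there exists ε > 0 such that for every t with |t| < ε the series Σ_{k=0}^∞ ((2k)!)² / (16^k (k!)² (2k+1)!) · f(t)^{2k+1} converges with sum t. Then for every j ∈ ℕ the (2j)-th derivative of f at 0 equals 0 and the (2j+1)-st derivative of f at 0 equals (−1)^j / 4^j. -/

import Mathlib

/-!
The mirror map `g₂(z) = ∑ (2k)!² / (16ᵏ k!² (2k+1)!) z^(2k+1)` equals `2 arcsin (z / 2)`:
differentiating termwise gives `∑ C(2k, k) (z² / 16)ᵏ`, the binomial series of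
`(1 - z² / 4)^(-1/2)`, which is the derivative of `2 arcsin (z / 2)`, and both sides vanish at `0`.
Hence `g₂ (f t) = t` forces `f t = 2 sin (t / 2)` near `0`, and the derivatives of `f` at `0`
are those of `2 sin (t / 2)`.
-/

open Real Filter Topology Polynomial

theorem Ring.choose_natCast_sub_half (n : ℕ) :
    Ring.choose ((n : ℝ) - 1 / 2) n = Nat.centralBinom n / 4 ^ n := by
  induction n with
  | zero => simp
  | succ n ih =>
    have hC :
        ((n : ℝ) + 1) * Nat.centralBinom (n + 1) = 2 * (2 * n + 1) * Nat.centralBinom n := by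
      exact_mod_cast Nat.succ_mul_centralBinom_succ n
    have hP : (descPochhammer ℤ (n + 1)).smeval ((n + 1 : ℕ) - 1 / 2 : ℝ) =
        (n + 1 / 2) * (descPochhammer ℤ n).smeval ((n : ℝ) - 1 / 2) := by
      rw [descPochhammer_succ_left, smeval_mul, smeval_comp, smeval_sub, smeval_X, smeval_one]
      push_cast
      ring_nf
    rw [Ring.choose_eq_smul, smul_eq_mul] at ih ⊢
    rw [hP, Nat.factorial_succ, Nat.cast_mul, mul_inv, mul_mul_mul_comm, ih, pow_succ]
    push_cast
    field_simp
    linear_combination (-2 : ℝ) * hC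

theorem hasSum_centralBinom_mul_pow {y : ℝ} (hy : |y| < 1 / 4) :
    HasSum (fun n => (Nat.centralBinom n : ℝ) * y ^ n) (1 / √(1 - 4 * y)) := by
  have hmem : 4 * y ∈ Metric.eball (0 : ℝ) 1 := by
    rw [Metric.mem_eball, edist_zero_right, ← ofReal_norm, ENNReal.ofReal_lt_one,
      Real.norm_eq_abs, abs_mul, abs_of_pos four_pos]
    linarith
  have h := (one_div_one_sub_rpow_hasFPowerSeriesOnBall_zero (1 / 2)).hasSum hmem
  simp only [FormalMultilinearSeries.ofScalars_apply_eq, smul_eq_mul, zero_add,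
    ← sqrt_eq_rpow] at h
  have hterm (n : ℕ) :
      Ring.choose (1 / 2 + n - 1 : ℝ) n * (4 * y) ^ n = Nat.centralBinom n * y ^ n := by
    rw [show (1 / 2 : ℝ) + n - 1 = n - 1 / 2 by ring, Ring.choose_natCast_sub_half, mul_pow]
    field_simp
  simpa only [hterm] using h

lemma hasDerivAt_centralBinom_div_mul_pow (k : ℕ) (w : ℝ) :
    HasDerivAt (fun w : ℝ => Nat.centralBinom k / (4 ^ k * (2 * k + 1)) * w ^ (2 * k + 1))
      (Nat.centralBinom k * (w ^ 2 / 4) ^ k) w := by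
  refine ((hasDerivAt_pow (2 * k + 1) w).const_mul _).congr_deriv ?_
  rw [Nat.add_sub_cancel, div_pow, ← pow_mul]
  push_cast
  field_simp

lemma norm_centralBinom_mul_pow_le {r w : ℝ} (hw : |w| ≤ r) (k : ℕ) :
    ‖(Nat.centralBinom k : ℝ) * (w ^ 2 / 4) ^ k‖ ≤ (r ^ 2) ^ k := by
  have hC : (Nat.centralBinom k : ℝ) ≤ 4 ^ k := by
    exact_mod_cast Nat.centralBinom_le_four_pow k
  have hw2 : w ^ 2 ≤ r ^ 2 := sq_le_sq' (abs_le.1 hw).1 (abs_le.1 hw).2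
  rw [Real.norm_eq_abs, abs_of_nonneg (by positivity), div_pow, ← mul_div_assoc,
    div_le_iff₀ (by positivity)]
  calc (Nat.centralBinom k : ℝ) * (w ^ 2) ^ k ≤ 4 ^ k * (r ^ 2) ^ k := by gcongr
    _ = (r ^ 2) ^ k * 4 ^ k := mul_comm _ _

theorem Real.hasSum_arcsin {x : ℝ} (hx : |x| < 1) :
    HasSum (fun k : ℕ => Nat.centralBinom k / (4 ^ k * (2 * k + 1)) * x ^ (2 * k + 1))
      (arcsin x) := by
  obtain ⟨r, hxr, hr1⟩ := exists_between hx
  set s := Metric.ball (0 : ℝ) r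
  have hs : IsOpen s := Metric.isOpen_ball
  have hs' : IsPreconnected s := (convex_ball 0 r).isPreconnected
  have habs {w : ℝ} (hw : w ∈ s) : |w| < r := by simpa [s] using hw
  have h0s : (0 : ℝ) ∈ s := Metric.mem_ball_self ((abs_nonneg x).trans_lt hxr)
  have hxs : x ∈ s := by simpa [s] using hxr
  have hu : Summable fun k : ℕ => (r ^ 2) ^ k :=
    summable_geometric_of_lt_one (by positivity) (by nlinarith [abs_nonneg x])
  have hbound (k : ℕ) (w : ℝ) (hw : w ∈ s) := norm_centralBinom_mul_pow_le (habs hw).le k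
  have hsum0 : Summable fun k : ℕ =>
      (Nat.centralBinom k : ℝ) / (4 ^ k * (2 * k + 1)) * (0 : ℝ) ^ (2 * k + 1) := by
    simp
  have hderiv {w : ℝ} (hw : w ∈ s) :
      HasDerivAt (fun w => ∑' k : ℕ,
        (Nat.centralBinom k : ℝ) / (4 ^ k * (2 * k + 1)) * w ^ (2 * k + 1))
        (1 / √(1 - w ^ 2)) w := by
    have hw4 : |w ^ 2 / 4| < 1 / 4 := by
      rw [abs_of_nonneg (by positivity)]
      nlinarith [habs hw, abs_nonneg w, sq_abs w]
    have h := hasDerivAt_tsum_of_isPreconnected hu hs hs'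
      (fun k w _ => hasDerivAt_centralBinom_div_mul_pow k w) hbound h0s hsum0 hw
    rwa [(hasSum_centralBinom_mul_pow hw4).tsum_eq, mul_div_cancel₀ _ four_ne_zero] at h
  have harcsin {w : ℝ} (hw : w ∈ s) : HasDerivAt arcsin (1 / √(1 - w ^ 2)) w := by
    have := habs hw
    exact hasDerivAt_arcsin (by grind) (by grind)
  have heq := hs.eqOn_of_deriv_eq hs'
    (fun w hw => (hderiv hw).differentiableAt.differentiableWithinAt)
    (fun w hw => (harcsin hw).differentiableAt.differentiableWithinAt)
    (fun w hw => (hderiv hw).deriv.trans (harcsin hw).deriv.symm) h0s (by simp)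
  rw [← heq hxs]
  exact (summable_of_summable_hasDerivAt_of_isPreconnected hu hs hs'
    (fun k w _ => hasDerivAt_centralBinom_div_mul_pow k w) hbound h0s hsum0 hxs).hasSum

lemma factorial_sq_div_eq_centralBinom_div (k : ℕ) :
    ((2 * k).factorial : ℝ) ^ 2 / (16 ^ k * (k.factorial : ℝ) ^ 2 * (2 * k + 1).factorial) =
      Nat.centralBinom k / (16 ^ k * (2 * k + 1)) := by
  have hC : (Nat.centralBinom k : ℝ) * (k.factorial : ℝ) ^ 2 = (2 * k).factorial := by
    have h := Nat.choose_mul_factorial_mul_factorial (Nat.le_mul_of_pos_left k two_pos)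
    rw [show 2 * k - k = k by omega, mul_assoc, ← Nat.centralBinom_eq_two_mul_choose] at h
    rw [sq]
    exact_mod_cast h
  rw [Nat.factorial_succ]
  push_cast
  rw [← hC]
  field_simp

theorem hasSum_two_mul_arcsin_half {z : ℝ} (hz : |z| < 2) :
    HasSum (fun k : ℕ => ((2 * k).factorial : ℝ) ^ 2 /
        (16 ^ k * (k.factorial : ℝ) ^ 2 * (2 * k + 1).factorial) * z ^ (2 * k + 1))
      (2 * arcsin (z / 2)) := by
  have hz2 : |z / 2| < 1 := by rw [abs_div, abs_two]; linarith
  refine ((hasSum_arcsin hz2).mul_left 2).congr_fun fun k => ?_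
  rw [factorial_sq_div_eq_centralBinom_div, div_pow, pow_succ 2, pow_mul 2,
    show (16 : ℝ) = 2 ^ 2 * 4 by norm_num, mul_pow]
  field_simp

theorem eq_two_mul_sin_half_of_hasSum {z t : ℝ} (hz : |z| < 2)
    (h : HasSum (fun k : ℕ => ((2 * k).factorial : ℝ) ^ 2 /
        (16 ^ k * (k.factorial : ℝ) ^ 2 * (2 * k + 1).factorial) * z ^ (2 * k + 1)) t) :
    z = 2 * sin (t / 2) := by
  obtain ⟨hz₁, hz₂⟩ := abs_lt.1 hz
  rw [← (hasSum_two_mul_arcsin_half hz).unique h, mul_div_cancel_left₀ _ two_ne_zero,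
    sin_arcsin (by linarith) (by linarith)]
  ring

lemma iteratedDeriv_two_mul_sin_half (n : ℕ) (t : ℝ) :
    iteratedDeriv n (fun t => 2 * sin (t / 2)) t = 2 / 2 ^ n * iteratedDeriv n sin (t / 2) := by
  have h : (fun t : ℝ => sin (t / 2)) = fun t => sin (2⁻¹ * t) := by
    ext t; rw [div_eq_inv_mul]
  rw [iteratedDeriv_const_mul_field, h, iteratedDeriv_comp_const_mul contDiff_sin,
    div_eq_inv_mul t]
  simp only [inv_pow]
  ring

/-- Open orbifold Gromov–Witten invariants of ℙ(1,1,2): if `f` is analytic at `0`,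
`f 0 = 0`, and `g₂(f(t)) = t` for `t` near `0` (in the sense of convergent sums),
then the even derivatives of `f` at `0` vanish and the odd ones equal
`(−1)ʲ/4ʲ`. -/
theorem openGW_P112 (f : ℝ → ℝ) (hf : AnalyticAt ℝ f 0) (hf0 : f 0 = 0)
    (hinv : ∃ ε > (0 : ℝ), ∀ t : ℝ, |t| < ε →
      HasSum (fun k : ℕ =>
        ((Nat.factorial (2 * k) : ℝ)) ^ 2 /
            (16 ^ k * (Nat.factorial k : ℝ) ^ 2 * (Nat.factorial (2 * k + 1) : ℝ)) *
          (f t) ^ (2 * k + 1)) t) :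
    ∀ j : ℕ, iteratedDeriv (2 * j) f 0 = 0 ∧
      iteratedDeriv (2 * j + 1) f 0 = (-1) ^ j / 4 ^ j := by
  obtain ⟨ε, hε, hsum⟩ := hinv
  have hsmall : ∀ᶠ t in 𝓝 0, |t| < ε := by simpa using eventually_abs_sub_lt (0 : ℝ) hε
  have hbounded : ∀ᶠ t in 𝓝 0, |f t| < 2 :=
    (continuous_abs.continuousAt.comp hf.continuousAt).eventually (gt_mem_nhds (by simp [hf0]))
  have hf_eq : f =ᶠ[𝓝 0] fun t => 2 * sin (t / 2) := by
    filter_upwards [hsmall, hbounded] with t ht hft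
    exact eq_two_mul_sin_half_of_hasSum hft (hsum t ht)
  intro j
  simp only [hf_eq.iteratedDeriv_eq, iteratedDeriv_two_mul_sin_half, iteratedDeriv_even_sin,
    iteratedDeriv_odd_sin]
  refine ⟨by simp, ?_⟩
  rw [pow_succ, pow_mul]
  norm_num
  field_simp
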